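/- For every real x > 0, the quantity F₂(x) = 2·(1 + 1·(x·coth x − 1)/sinh²(x)) = 2·(1 − (1 − x·coth x)/sinh²(x)) satisfies 2 < F₂(x) ≤ 8/3. -/

import Mathlib

/-! Writing `s = sinh x`, `c = cosh x`, one has `F₂ x = 2 + 2 (x c - s) / s³`, so the claim is
`0 < x c - s ≤ s³ / 3` for `x > 0`. Both functions `x c - s` and `s³ - 3 (x c - s)` vanish at `0`
and increase on `[0, ∞)`: their derivatives are `x s` and `3 s (s c - x) = 3 s (sinh (2x) - 2x) / 2`. -/

open Set

namespace Real

theorem mul_cosh_sub_sinh_strictMonoOn :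
    StrictMonoOn (fun x => x * cosh x - sinh x) (Ici 0) := by
  refine strictMonoOn_of_deriv_pos (convex_Ici 0) (by fun_prop) fun x hx => ?_
  rw [interior_Ici, mem_Ioi] at hx
  have hderiv : HasDerivAt (fun x => x * cosh x - sinh x) (x * sinh x) x :=
    (((hasDerivAt_id' x).fun_mul (hasDerivAt_cosh x)).fun_sub (hasDerivAt_sinh x)).congr_deriv
      (by ring)
  rw [hderiv.deriv]
  exact mul_pos hx (sinh_pos_iff.mpr hx)

theorem sinh_lt_mul_cosh {x : ℝ} (hx : 0 < x) : sinh x < x * cosh x := by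
  simpa using mul_cosh_sub_sinh_strictMonoOn self_mem_Ici hx.le hx

theorem sinh_pow_three_sub_three_mul_mul_cosh_sub_sinh_strictMonoOn :
    StrictMonoOn (fun x => sinh x ^ 3 - 3 * (x * cosh x - sinh x)) (Ici 0) := by
  refine strictMonoOn_of_deriv_pos (convex_Ici 0) (by fun_prop) fun x hx => ?_
  rw [interior_Ici, mem_Ioi] at hx
  have hderiv : HasDerivAt (fun x => sinh x ^ 3 - 3 * (x * cosh x - sinh x))
      (3 * sinh x * (sinh x * cosh x - x)) x :=
    (((hasDerivAt_sinh x).fun_pow 3).fun_sub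
      ((((hasDerivAt_id' x).fun_mul (hasDerivAt_cosh x)).fun_sub
        (hasDerivAt_sinh x)).const_mul 3)).congr_deriv (by push_cast; ring)
  have hdouble : 2 * x < 2 * (sinh x * cosh x) := by
    rw [← mul_assoc, ← sinh_two_mul]
    exact self_lt_sinh_iff.mpr (by positivity)
  have hs : 0 < sinh x := sinh_pos_iff.mpr hx
  rw [hderiv.deriv]
  exact mul_pos (by positivity) (by linarith)

theorem three_mul_mul_cosh_sub_sinh_lt_sinh_pow_three {x : ℝ} (hx : 0 < x) :
    3 * (x * cosh x - sinh x) < sinh x ^ 3 := by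
  simpa using sinh_pow_three_sub_three_mul_mul_cosh_sub_sinh_strictMonoOn self_mem_Ici hx.le hx

end Real

open Real in
/-- For every `x > 0`, `F₂ x = 2 (1 - (1 - x coth x)/sinh² x)` satisfies
`2 < F₂ x ≤ 8/3`, where `coth x = cosh x / sinh x`. -/
theorem two_lt_F_two_le_eight_thirds (x : ℝ) (hx : 0 < x) :
    2 < 2 * (1 - (1 - x * (Real.cosh x / Real.sinh x)) / (Real.sinh x) ^ 2) ∧
    2 * (1 - (1 - x * (Real.cosh x / Real.sinh x)) / (Real.sinh x) ^ 2) ≤ 8/3 := by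
  have hs : 0 < sinh x := sinh_pos_iff.mpr hx
  have hF : 2 * (1 - (1 - x * (cosh x / sinh x)) / sinh x ^ 2)
      = 2 + 2 * ((x * cosh x - sinh x) / sinh x ^ 3) := by
    field_simp
    ring
  rw [hF]
  have hpos : 0 < (x * cosh x - sinh x) / sinh x ^ 3 :=
    div_pos (sub_pos.mpr (sinh_lt_mul_cosh hx)) (by positivity)
  have hle : (x * cosh x - sinh x) / sinh x ^ 3 ≤ 1 / 3 := by
    rw [div_le_iff₀ (by positivity)]
    linarith [three_mul_mul_cosh_sub_sinh_lt_sinh_pow_three hx]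
  constructor <;> linarith
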